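/- The translation (·)_λ from Λ⊕ to the pure λ-calculus, sending M ⊕ N to z (M)_λ (N)_λ for a fixed fresh variable z, is a sound and complete simulation of β_v-reduction: (1) M →_{β_v} N implies (M)_λ →_{β_v} (N)_λ; (2) if (M)_λ →_{β_v} Q then there is a unique N with Q = (N)_λ and M →_{β_v} N. -/

import Mathlib

open scoped NNReal ENNReal

/-- A (raw) multidistribution on `X`: a finite multiset of weighted elements. -/
abbrev MDist (X : Type) := Multiset (ℝ≥0 × X)

namespace MDist

/-- Scalar multiplication of a multidistribution. -/
def scale {X : Type} (p : ℝ≥0) (m : MDist X) : MDist X :=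
  m.map fun q => (p * q.1, q.2)

/-- The singleton multidistribution `[1 M]`. -/
def single {X : Type} (M : X) : MDist X := {(1, M)}

/-- A multidistribution is proper when every weight lies in `(0,1]` and the
weights sum to at most `1`. -/
def Proper {X : Type} (m : MDist X) : Prop :=
  (∀ q ∈ m, 0 < q.1 ∧ q.1 ≤ 1) ∧ (m.map Prod.fst).sum ≤ 1

/-- The probability that the distribution associated to a multidistribution
assigns to an event `A`. -/
noncomputable def mass {X : Type} (m : MDist X) (A : Set X) : ℝ≥0∞ :=
  (m.map fun q => A.indicator (fun _ => (q.1 : ℝ≥0∞)) q.2).sum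

end MDist

/-- One component of the lifting: either keep the term or perform a step. -/
def LiftTerm {X : Type} (r : X → MDist X → Prop) (M : X) (m : MDist X) : Prop :=
  m = MDist.single M ∨ r M m

/-- The lifting of a relation `r ⊆ X × MDist X` to a binary relation on
multidistributions. -/
inductive Lift {X : Type} (r : X → MDist X → Prop) : MDist X → MDist X → Prop
  | nil : Lift r 0 0
  | cons {p : ℝ≥0} {M : X} {m s t : MDist X} :
      LiftTerm r M m → Lift r s t → Lift r ((p, M) ::ₘ s) (MDist.scale p m + t)
/-- Terms of `Λ⊕` (de Bruijn representation). -/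
inductive Term : Type
  | var : ℕ → Term
  | lam : Term → Term
  | app : Term → Term → Term
  | choice : Term → Term → Term
deriving DecidableEq

namespace Term

/-- Shifting of de Bruijn indices above a cutoff. -/
def liftAux (c : ℕ) : Term → Term
  | var k => if k < c then var k else var (k + 1)
  | lam M => lam (liftAux (c + 1) M)
  | app M N => app (liftAux c M) (liftAux c N)
  | choice M N => choice (liftAux c M) (liftAux c N)

/-- Capture-avoiding substitution `M[N/j]`. -/
def subst : Term → ℕ → Term → Term
  | var k, j, N => if k = j then N else if j < k then var (k - 1) else var k
  | lam M, j, N => lam (subst M (j + 1) (liftAux 0 N))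
  | app M P, j, N => app (subst M j N) (subst P j N)
  | choice M P, j, N => choice (subst M j N) (subst P j N)

/-- Values: variables and abstractions. -/
inductive IsValue : Term → Prop
  | var (n : ℕ) : IsValue (var n)
  | lam (M : Term) : IsValue (lam M)

/-- `β_v`-reduction, closed under arbitrary contexts. -/
inductive BetaStep : Term → Term → Prop
  | beta {M V : Term} : IsValue V → BetaStep (app (lam M) V) (subst M 0 V)
  | appL {M M' N : Term} : BetaStep M M' → BetaStep (app M N) (app M' N)
  | appR {M N N' : Term} : BetaStep N N' → BetaStep (app M N) (app M N')
  | lam {M M' : Term} : BetaStep M M' → BetaStep (lam M) (lam M')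
  | chL {M M' N : Term} : BetaStep M M' → BetaStep (choice M N) (choice M' N)
  | chR {M N N' : Term} : BetaStep N N' → BetaStep (choice M N) (choice M N')

/-- Surface `β_v`-reduction: closure under surface contexts `S ::= □ | MS | SM`. -/
inductive SurfBetaStep : Term → Term → Prop
  | beta {M V : Term} : IsValue V → SurfBetaStep (app (lam M) V) (subst M 0 V)
  | appL {M M' N : Term} : SurfBetaStep M M' → SurfBetaStep (app M N) (app M' N)
  | appR {M N N' : Term} : SurfBetaStep N N' → SurfBetaStep (app M N) (app M N')

/-- `PlusStep M A B` holds when `M = S(P ⊕ Q)`, `A = S(P)`, `B = S(Q)` for a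
surface context `S ::= □ | MS | SM`. -/
inductive PlusStep : Term → Term → Term → Prop
  | choice {M N : Term} : PlusStep (choice M N) M N
  | appL {M A B N : Term} : PlusStep M A B → PlusStep (app M N) (app A N) (app B N)
  | appR {M N A B : Term} : PlusStep N A B → PlusStep (app M N) (app M A) (app M B)

end Term

open Term

/-- The reduction `→_{β_v} ⊆ Λ⊕ × MDST(Λ⊕)`. -/
def betaRed (M : Term) (m : MDist Term) : Prop :=
  ∃ N, BetaStep M N ∧ m = MDist.single N

/-- The probabilistic reduction `→_⊕ ⊆ Λ⊕ × MDST(Λ⊕)`. -/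
def plusRed (M : Term) (m : MDist Term) : Prop :=
  ∃ A B, PlusStep M A B ∧ m = {((1 : ℝ≥0) / 2, A), ((1 : ℝ≥0) / 2, B)}

/-- The full reduction `→ = →_{β_v} ∪ →_⊕`. -/
def red (M : Term) (m : MDist Term) : Prop := betaRed M m ∨ plusRed M m

/-- Surface reduction `→ₛ`: β_v and ⊕ rules closed under surface contexts. -/
def surfRed (M : Term) (m : MDist Term) : Prop :=
  (∃ N, SurfBetaStep M N ∧ m = MDist.single N) ∨ plusRed M m

/-- A step is deep when it is not a surface step. -/
def deepRed (M : Term) (m : MDist Term) : Prop := red M m ∧ ¬ surfRed M m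

/-- Pure λ-terms, together with a fixed fresh (globally free) variable `z`
used by no term of the image of the translation except at `⊕`. -/
inductive PTerm : Type
  | var : ℕ → PTerm
  | z : PTerm
  | lam : PTerm → PTerm
  | app : PTerm → PTerm → PTerm
deriving DecidableEq

namespace PTerm

def liftAux (c : ℕ) : PTerm → PTerm
  | var k => if k < c then var k else var (k + 1)
  | z => z
  | lam M => lam (liftAux (c + 1) M)
  | app M N => app (liftAux c M) (liftAux c N)

def subst : PTerm → ℕ → PTerm → PTerm
  | var k, j, N => if k = j then N else if j < k then var (k - 1) else var k
  | z, _, _ => z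
  | lam M, j, N => lam (subst M (j + 1) (liftAux 0 N))
  | app M P, j, N => app (subst M j N) (subst P j N)

/-- Values of the pure CbV λ-calculus: variables and abstractions. -/
inductive IsValue : PTerm → Prop
  | var (n : ℕ) : IsValue (var n)
  | z : IsValue z
  | lam (M : PTerm) : IsValue (lam M)

/-- CbV β-reduction on pure λ-terms, closed under arbitrary contexts. -/
inductive BetaStep : PTerm → PTerm → Prop
  | beta {M V : PTerm} : IsValue V → BetaStep (app (lam M) V) (subst M 0 V)
  | appL {M M' N : PTerm} : BetaStep M M' → BetaStep (app M N) (app M' N)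
  | appR {M N N' : PTerm} : BetaStep N N' → BetaStep (app M N) (app M N')
  | lam {M M' : PTerm} : BetaStep M M' → BetaStep (lam M) (lam M')

end PTerm

/-- The translation `(·)_λ : Λ⊕ → Λ`, sending `M ⊕ N` to `z (M)_λ (N)_λ`. -/
def trL : Term → PTerm
  | Term.var k => PTerm.var k
  | Term.lam M => PTerm.lam (trL M)
  | Term.app M N => PTerm.app (trL M) (trL N)
  | Term.choice M N => PTerm.app (PTerm.app PTerm.z (trL M)) (trL N)

/-!
The translation is injective, commutes with shifting and substitution, and preserves and
reflects values, so every β_v-redex of `M` becomes a β_v-redex of `(M)_λ`. Conversely,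
`z` is not an abstraction and no `(M)_λ` is `z`, so the only redexes of `z (M)_λ (N)_λ`
are those of `(M)_λ` and `(N)_λ`: every step of `(M)_λ` comes from a step of `M`,
which is unique by injectivity.
-/

theorem trL_liftAux (c : ℕ) (M : Term) :
    trL (Term.liftAux c M) = PTerm.liftAux c (trL M) := by
  induction M generalizing c with
  | var k =>
    simp only [Term.liftAux, PTerm.liftAux, trL]
    split <;> rfl
  | lam M ih => simp [Term.liftAux, PTerm.liftAux, trL, ih]
  | app M N ihM ihN => simp [Term.liftAux, PTerm.liftAux, trL, ihM, ihN]
  | choice M N ihM ihN => simp [Term.liftAux, PTerm.liftAux, trL, ihM, ihN]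

theorem trL_subst (M : Term) (j : ℕ) (N : Term) :
    trL (Term.subst M j N) = PTerm.subst (trL M) j (trL N) := by
  induction M generalizing j N with
  | var k =>
    simp only [Term.subst, trL, PTerm.subst]
    split
    · rfl
    · split <;> rfl
  | lam M ih => simp [Term.subst, trL, PTerm.subst, ih, trL_liftAux]
  | app M P ihM ihP => simp [Term.subst, trL, PTerm.subst, ihM, ihP]
  | choice M P ihM ihP => simp [Term.subst, trL, PTerm.subst, ihM, ihP]

theorem trL_ne_z (M : Term) : trL M ≠ PTerm.z := by
  cases M <;> simp [trL]

theorem trL_ne_app_z (M : Term) (P : PTerm) : trL M ≠ PTerm.app PTerm.z P := by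
  cases M <;> simp [trL, trL_ne_z]

theorem trL_injective : Function.Injective trL := by
  intro M
  induction M with
  | var k => intro N h; cases N <;> simp_all [trL]
  | lam M ih =>
    intro N h
    cases N <;> simp only [trL, PTerm.lam.injEq, reduceCtorEq] at h
    rw [ih h]
  | app M P ihM ihP =>
    intro N h
    cases N <;> simp only [trL, PTerm.app.injEq, reduceCtorEq] at h
    · rw [ihM h.1, ihP h.2]
    · exact absurd h.1 (trL_ne_app_z _ _)
  | choice M P ihM ihP =>
    intro N h
    cases N <;> simp only [trL, PTerm.app.injEq, reduceCtorEq] at h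
    · exact absurd h.1.symm (trL_ne_app_z _ _)
    · rw [ihM h.1.2, ihP h.2]

theorem trL_eq_lam {M : Term} {P : PTerm} (h : trL M = PTerm.lam P) :
    ∃ M₀, M = Term.lam M₀ ∧ trL M₀ = P := by
  cases M <;> simp only [trL, PTerm.lam.injEq, reduceCtorEq] at h
  exact ⟨_, rfl, h⟩

theorem isValue_trL_iff {M : Term} : PTerm.IsValue (trL M) ↔ Term.IsValue M := by
  constructor
  · intro h
    cases M <;> simp only [trL] at h
    case var n => exact .var n
    case lam M => exact .lam M
    all_goals cases h
  · rintro (n | M)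
    exacts [.var n, .lam _]

theorem Term.BetaStep.trL {M N : Term} (h : Term.BetaStep M N) :
    PTerm.BetaStep (trL M) (trL N) := by
  induction h with
  | beta hV => rw [trL_subst]; exact .beta (isValue_trL_iff.mpr hV)
  | appL _ ih => exact .appL ih
  | appR _ ih => exact .appR ih
  | lam _ ih => exact .lam ih
  | chL _ ih => exact .appL (.appR ih)
  | chR _ ih => exact .appR ih

theorem exists_betaStep_of_betaStep_trL {M : Term} {Q : PTerm}
    (h : PTerm.BetaStep (trL M) Q) : ∃ N, Q = trL N ∧ Term.BetaStep M N := by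
  induction M generalizing Q with
  | var k => cases h
  | lam M ih =>
    cases h with
    | lam h =>
      obtain ⟨N, rfl, hMN⟩ := ih h
      exact ⟨.lam N, rfl, .lam hMN⟩
  | app M N ihM ihN =>
    rw [trL] at h
    generalize hM : trL M = P at h
    cases h with
    | beta hV =>
      obtain ⟨M₀, rfl, rfl⟩ := trL_eq_lam hM
      exact ⟨Term.subst M₀ 0 N, (trL_subst _ _ _).symm, .beta (isValue_trL_iff.mp hV)⟩
    | appL h =>
      subst hM
      obtain ⟨M', rfl, hMM'⟩ := ihM h
      exact ⟨.app M' N, rfl, .appL hMM'⟩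
    | appR h =>
      subst hM
      obtain ⟨N', rfl, hNN'⟩ := ihN h
      exact ⟨.app M N', rfl, .appR hNN'⟩
  | choice M N ihM ihN =>
    cases h with
    | appL h =>
      cases h with
      | appL h => cases h
      | appR h =>
        obtain ⟨M', rfl, hMM'⟩ := ihM h
        exact ⟨.choice M' N, rfl, .chL hMM'⟩
    | appR h =>
      obtain ⟨N', rfl, hNN'⟩ := ihN h
      exact ⟨.choice M N', rfl, .chR hNN'⟩

/-- Simulation: the translation `(·)_λ` is sound and complete for
β_v-reduction. -/
theorem translation_simulation :
    (∀ M N : Term, Term.BetaStep M N → PTerm.BetaStep (trL M) (trL N)) ∧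
    (∀ (M : Term) (Q : PTerm), PTerm.BetaStep (trL M) Q →
      ∃! N : Term, Q = trL N ∧ Term.BetaStep M N) := by
  refine ⟨fun _ _ h => h.trL, fun M Q h => ?_⟩
  obtain ⟨N, rfl, hMN⟩ := exists_betaStep_of_betaStep_trL h
  exact ⟨N, ⟨rfl, hMN⟩, fun N' hN' => (trL_injective hN'.1).symm⟩
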